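/- Let f : ℤ → ℝ be nonnegative and of bounded variation, and let α ≥ 1/3. Let p < r < q be integers such that 𝓜^α f(p) < 𝓜^α f(r) > 𝓜^α f(q) and 𝓜^α f(y) ≤ 𝓜^α f(r) for every integer y with p ≤ y ≤ q. Then 2·𝓜^α f(r) − 𝓜^α f(p) − 𝓜^α f(q) ≤ Σ_{i=p}^{q−1} |f(i+1) − f(i)|. -/

import Mathlib

open scoped ENNReal

/-- The discrete nontangential Hardy–Littlewood maximal function:
`𝓜^α f(x) = sup { (1/(2R+1)) Σ_{i=y−R}^{y+R} f(i) : R ∈ ℕ, y ∈ ℤ, |x − y| ≤ ⌈αR⌉ }`. -/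
noncomputable def dntMax (α : ℝ) (f : ℤ → ℝ) (x : ℤ) : ℝ :=
  sSup { a : ℝ | ∃ R : ℕ, ∃ y : ℤ, |x - y| ≤ ⌈α * (R : ℝ)⌉ ∧
    a = (1 / (2 * (R : ℝ) + 1)) * ∑ i ∈ Finset.Icc (y - (R : ℤ)) (y + (R : ℤ)), f i }

/-- The total variation of a discrete function `g : ℤ → ℝ`,
`Var(g) = Σ_{i∈ℤ} |g(i+1) − g(i)|`, valued in `ℝ≥0∞`. -/
noncomputable def dVar (g : ℤ → ℝ) : ℝ≥0∞ :=
  ∑' i : ℤ, ENNReal.ofReal |g (i + 1) - g i|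

namespace DntAux

def dset (α : ℝ) (f : ℤ → ℝ) (x : ℤ) : Set ℝ :=
  { a : ℝ | ∃ R : ℕ, ∃ y : ℤ, |x - y| ≤ ⌈α * (R : ℝ)⌉ ∧
    a = (1 / (2 * (R : ℝ) + 1)) * ∑ i ∈ Finset.Icc (y - (R : ℤ)) (y + (R : ℤ)), f i }

lemma dntMax_eq (α : ℝ) (f : ℤ → ℝ) (x : ℤ) : dntMax α f x = sSup (dset α f x) := rfl

lemma telescope (f : ℤ → ℝ) {a b : ℤ} (h : a ≤ b) :
    f b - f a = ∑ i ∈ Finset.Ico a b, (f (i + 1) - f i) := by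
  refine Int.le_induction (motive := fun b _ => f b - f a = ∑ i ∈ Finset.Ico a b, (f (i + 1) - f i))
    ?_ ?_ b h
  · simp
  · intro b hb ih
    have hins : Finset.Ico a (b + 1) = insert b (Finset.Ico a b) := by
      ext i; simp only [Finset.mem_Ico, Finset.mem_insert]; omega
    rw [hins, Finset.sum_insert (by simp [Finset.mem_Ico])]
    linarith

lemma abs_sub_le_var (f : ℤ → ℝ) {a b : ℤ} (h : a ≤ b) :
    |f b - f a| ≤ ∑ i ∈ Finset.Ico a b, |f (i + 1) - f i| := by
  rw [telescope f h]
  exact Finset.abs_sum_le_sum_abs _ _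

lemma sum_abs_le {f : ℤ → ℝ} (hbv : dVar f ≠ ⊤) (s : Finset ℤ) :
    ∑ i ∈ s, |f (i + 1) - f i| ≤ (dVar f).toReal := by
  have h1 : ∑ i ∈ s, |f (i + 1) - f i|
      = (∑ i ∈ s, ENNReal.ofReal |f (i + 1) - f i|).toReal := by
    rw [ENNReal.toReal_sum (fun i _ => ENNReal.ofReal_ne_top)]
    exact Finset.sum_congr rfl fun i _ => (ENNReal.toReal_ofReal (abs_nonneg _)).symm
  rw [h1]
  exact ENNReal.toReal_mono hbv (ENNReal.sum_le_tsum s)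

lemma f_le_B {f : ℤ → ℝ} (hbv : dVar f ≠ ⊤) (x : ℤ) :
    f x ≤ f 0 + (dVar f).toReal := by
  rcases le_or_gt 0 x with h | h
  · have h1 := abs_sub_le_var f h
    have h2 := sum_abs_le hbv (Finset.Ico 0 x)
    have h3 := le_abs_self (f x - f 0)
    linarith
  · have h1 := abs_sub_le_var f h.le
    have h2 := sum_abs_le hbv (Finset.Ico x 0)
    have h3 := neg_abs_le (f 0 - f x)
    linarith


lemma bddAbove_dset {α : ℝ} {f : ℤ → ℝ} (hbv : dVar f ≠ ⊤) (x : ℤ) :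
    BddAbove (dset α f x) := by
  refine ⟨f 0 + (dVar f).toReal, ?_⟩
  rintro a ⟨R, y, -, rfl⟩
  set B := f 0 + (dVar f).toReal with hB
  have hcard : (Finset.Icc (y - (R:ℤ)) (y + (R:ℤ))).card = 2 * R + 1 := by
    rw [Int.card_Icc]; omega
  have hsum : ∑ i ∈ Finset.Icc (y - (R:ℤ)) (y + (R:ℤ)), f i ≤ (2 * (R:ℝ) + 1) * B := by
    calc ∑ i ∈ Finset.Icc (y - (R:ℤ)) (y + (R:ℤ)), f i
        ≤ ∑ _i ∈ Finset.Icc (y - (R:ℤ)) (y + (R:ℤ)), B :=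
          Finset.sum_le_sum fun i _ => f_le_B hbv i
      _ = (2 * (R:ℝ) + 1) * B := by
          rw [Finset.sum_const, hcard, nsmul_eq_mul]; push_cast; ring
  have hn : (0:ℝ) < 2 * (R:ℝ) + 1 := by positivity
  calc (1 / (2 * (R:ℝ) + 1)) * ∑ i ∈ Finset.Icc (y - (R:ℤ)) (y + (R:ℤ)), f i
      ≤ (1 / (2 * (R:ℝ) + 1)) * ((2 * (R:ℝ) + 1) * B) := by
        apply mul_le_mul_of_nonneg_left hsum (by positivity)
    _ = B := by field_simp

lemma le_dntMax {α : ℝ} {f : ℤ → ℝ} (hbv : dVar f ≠ ⊤) {x : ℤ} {a : ℝ}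
    (ha : a ∈ dset α f x) : a ≤ dntMax α f x :=
  le_csSup (bddAbove_dset hbv x) ha

lemma self_mem (α : ℝ) (f : ℤ → ℝ) (x : ℤ) : f x ∈ dset α f x := by
  refine ⟨0, x, by simp, ?_⟩
  norm_num

lemma f_le_dntMax {α : ℝ} {f : ℤ → ℝ} (hbv : dVar f ≠ ⊤) (x : ℤ) :
    f x ≤ dntMax α f x :=
  le_dntMax hbv (self_mem α f x)

lemma cover_S {α : ℝ} (hα : 1 / 3 ≤ α) (R : ℕ) (d : ℤ) (hd1 : 1 ≤ d)
    (hdR : d + ⌈α * (R:ℝ)⌉ + 1 ≤ (R:ℤ)) :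
    ∃ Sc : ℕ, d ≤ (Sc:ℤ) + ⌈α * (Sc:ℝ)⌉ ∧ (Sc:ℤ) ≤ d ∧ 2 * (Sc:ℤ) + 1 ≤ (R:ℤ) ∧
      ⌈α * (Sc:ℝ)⌉ ≤ (Sc:ℤ) := by
  classical
  have hα0 : (0:ℝ) ≤ α := by linarith
  have hcR : (0:ℤ) ≤ ⌈α * (R:ℝ)⌉ := Int.ceil_nonneg (by positivity)
  have hR2 : 2 ≤ (R:ℤ) := by omega
  -- α ≤ 1
  have hα1 : α ≤ 1 := by
    by_contra hgt
    push_neg at hgt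
    have hR2' : (2:ℝ) ≤ (R:ℝ) := by exact_mod_cast hR2
    have h1 : (R:ℝ) ≤ α * (R:ℝ) := by nlinarith
    have h2 : (R:ℤ) ≤ ⌈α * (R:ℝ)⌉ := by
      calc (R:ℤ) = ⌈((R:ℤ):ℝ)⌉ := (Int.ceil_intCast _).symm
        _ ≤ ⌈α * (R:ℝ)⌉ := Int.ceil_le_ceil (by push_cast; linarith)
    omega
  have hceil_le : ∀ n : ℕ, ⌈α * (n:ℝ)⌉ ≤ (n:ℤ) := by
    intro n
    rw [Int.ceil_le]
    push_cast
    nlinarith [Nat.cast_nonneg (α := ℝ) n]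
  let P : ℕ → Prop := fun n => d ≤ (n:ℤ) + ⌈α * (n:ℝ)⌉
  have hPd : P d.toNat := by
    have hc : ((d.toNat : ℕ) : ℤ) = d := Int.toNat_of_nonneg (by omega)
    have h0 : (0:ℤ) ≤ ⌈α * ((d.toNat : ℕ):ℝ)⌉ := Int.ceil_nonneg (by positivity)
    simp only [P]
    omega
  have hex : ∃ n, P n := ⟨d.toNat, hPd⟩
  set Sc := Nat.find hex with hSc
  have hspec : P Sc := Nat.find_spec hex
  have hmin : Sc ≤ d.toNat := Nat.find_min' hex hPd
  set T : ℕ := (R - 1) / 2 with hT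
  have hTfacts : 2 * T ≤ R - 1 ∧ R - 1 ≤ 2 * T + 1 := by
    constructor
    · omega
    · omega
  have hPT : P T := by
    have hc1 : ⌈α * ((T:ℝ) + (R:ℝ))⌉ ≤ ⌈α * (T:ℝ)⌉ + ⌈α * (R:ℝ)⌉ := by
      rw [mul_add]
      exact Int.ceil_add_le _ _
    have hc2 : ⌈((T:ℝ) + (R:ℝ)) / 3⌉ ≤ ⌈α * ((T:ℝ) + (R:ℝ))⌉ := by
      apply Int.ceil_le_ceil
      have hTR : (0:ℝ) ≤ (T:ℝ) + (R:ℝ) := by positivity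
      nlinarith
    have h2T : (R:ℤ) ≤ 2 * (T:ℤ) + 2 := by
      have := hTfacts.2
      omega
    have hc3 : (R:ℤ) - 1 - (T:ℤ) ≤ ⌈((T:ℝ) + (R:ℝ)) / 3⌉ := by
      have hlt : ((R:ℤ) - 2 - (T:ℤ)) < ⌈((T:ℝ) + (R:ℝ)) / 3⌉ := by
        rw [Int.lt_ceil]
        push_cast
        have : ((R:ℝ)) ≤ 2 * (T:ℝ) + 2 := by exact_mod_cast h2T
        linarith
      omega
    have : d ≤ (T:ℤ) + ⌈α * (T:ℝ)⌉ := by omega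
    exact this
  have hST : Sc ≤ T := Nat.find_min' hex hPT
  refine ⟨Sc, hspec, ?_, ?_, hceil_le Sc⟩
  · omega
  · have := hTfacts.1
    omega

lemma left_cover {α : ℝ} {f : ℤ → ℝ} (hbv : dVar f ≠ ⊤) (hα : 1 / 3 ≤ α)
    {R : ℕ} {y x : ℤ} (hx : x + ⌈α * (R:ℝ)⌉ < y) :
    ∃ W : ℕ, (W:ℤ) ≤ (R:ℤ) ∧ x ≤ y - (R:ℤ) + (W:ℤ) ∧
      ∑ i ∈ Finset.Ioc (y - (R:ℤ) - 1) (y - (R:ℤ) - 1 + (W:ℤ)), f i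
        ≤ (W:ℝ) * dntMax α f x := by
  have hα0 : (0:ℝ) ≤ α := by linarith
  have hcR : (0:ℤ) ≤ ⌈α * (R:ℝ)⌉ := Int.ceil_nonneg (by positivity)
  by_cases hpu : x ≤ y - (R:ℤ)
  · refine ⟨0, by omega, by omega, ?_⟩
    simp
  · push_neg at hpu
    set d : ℤ := x - (y - (R:ℤ)) with hd
    have hd1 : 1 ≤ d := by omega
    have hdR : d + ⌈α * (R:ℝ)⌉ + 1 ≤ (R:ℤ) := by omega
    obtain ⟨Sc, hc1, hc2, hc3, hc4⟩ := cover_S hα R d hd1 hdR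
    refine ⟨2 * Sc + 1, by push_cast; omega, by push_cast; omega, ?_⟩
    set yc : ℤ := (y - (R:ℤ)) + (Sc:ℤ) with hyc
    have hadm : |x - yc| ≤ ⌈α * (Sc:ℝ)⌉ := by
      rw [abs_le]
      constructor
      · have h0 : (0:ℤ) ≤ ⌈α * (Sc:ℝ)⌉ := Int.ceil_nonneg (by positivity)
        omega
      · omega
    have hmem : (1 / (2 * (Sc : ℝ) + 1)) *
        ∑ i ∈ Finset.Icc (yc - (Sc : ℤ)) (yc + (Sc : ℤ)), f i ∈ dset α f x :=
      ⟨Sc, yc, hadm, rfl⟩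
    have hle := le_dntMax hbv hmem
    have hpos : (0:ℝ) < 2 * (Sc:ℝ) + 1 := by positivity
    have hset : Finset.Ioc (y - (R:ℤ) - 1) (y - (R:ℤ) - 1 + ((2 * Sc + 1 : ℕ):ℤ))
        = Finset.Icc (yc - (Sc:ℤ)) (yc + (Sc:ℤ)) := by
      ext i
      simp only [Finset.mem_Ioc, Finset.mem_Icc]
      push_cast
      omega
    rw [hset]
    have heq : ∑ i ∈ Finset.Icc (yc - (Sc:ℤ)) (yc + (Sc:ℤ)), f i
        = (2 * (Sc:ℝ) + 1) * ((1 / (2 * (Sc : ℝ) + 1)) *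
            ∑ i ∈ Finset.Icc (yc - (Sc : ℤ)) (yc + (Sc : ℤ)), f i) := by
      field_simp
    rw [heq]
    calc (2 * (Sc:ℝ) + 1) * ((1 / (2 * (Sc : ℝ) + 1)) *
            ∑ i ∈ Finset.Icc (yc - (Sc : ℤ)) (yc + (Sc : ℤ)), f i)
        ≤ (2 * (Sc:ℝ) + 1) * dntMax α f x := by
          apply mul_le_mul_of_nonneg_left hle (by positivity)
      _ = ((2 * Sc + 1 : ℕ):ℝ) * dntMax α f x := by push_cast; ring

lemma right_cover {α : ℝ} {f : ℤ → ℝ} (hbv : dVar f ≠ ⊤) (hα : 1 / 3 ≤ α)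
    {R : ℕ} {y x : ℤ} (hx : y + ⌈α * (R:ℝ)⌉ < x) :
    ∃ W : ℕ, (W:ℤ) ≤ (R:ℤ) ∧ y + (R:ℤ) - (W:ℤ) ≤ x ∧
      ∑ i ∈ Finset.Ioc (y + (R:ℤ) - (W:ℤ)) (y + (R:ℤ)), f i
        ≤ (W:ℝ) * dntMax α f x := by
  have hα0 : (0:ℝ) ≤ α := by linarith
  have hcR : (0:ℤ) ≤ ⌈α * (R:ℝ)⌉ := Int.ceil_nonneg (by positivity)
  by_cases hpu : y + (R:ℤ) ≤ x
  · refine ⟨0, by omega, by omega, ?_⟩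
    simp
  · push_neg at hpu
    set d : ℤ := (y + (R:ℤ)) - x with hd
    have hd1 : 1 ≤ d := by omega
    have hdR : d + ⌈α * (R:ℝ)⌉ + 1 ≤ (R:ℤ) := by omega
    obtain ⟨Sc, hc1, hc2, hc3, hc4⟩ := cover_S hα R d hd1 hdR
    refine ⟨2 * Sc + 1, by push_cast; omega, by push_cast; omega, ?_⟩
    set yc : ℤ := (y + (R:ℤ)) - (Sc:ℤ) with hyc
    have hadm : |x - yc| ≤ ⌈α * (Sc:ℝ)⌉ := by
      rw [abs_le]
      constructor
      · omega
      · have h0 : (0:ℤ) ≤ ⌈α * (Sc:ℝ)⌉ := Int.ceil_nonneg (by positivity)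
        omega
    have hmem : (1 / (2 * (Sc : ℝ) + 1)) *
        ∑ i ∈ Finset.Icc (yc - (Sc : ℤ)) (yc + (Sc : ℤ)), f i ∈ dset α f x :=
      ⟨Sc, yc, hadm, rfl⟩
    have hle := le_dntMax hbv hmem
    have hpos : (0:ℝ) < 2 * (Sc:ℝ) + 1 := by positivity
    have hset : Finset.Ioc (y + (R:ℤ) - ((2 * Sc + 1 : ℕ):ℤ)) (y + (R:ℤ))
        = Finset.Icc (yc - (Sc:ℤ)) (yc + (Sc:ℤ)) := by
      ext i
      simp only [Finset.mem_Ioc, Finset.mem_Icc]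
      push_cast
      omega
    rw [hset]
    have heq : ∑ i ∈ Finset.Icc (yc - (Sc:ℤ)) (yc + (Sc:ℤ)), f i
        = (2 * (Sc:ℝ) + 1) * ((1 / (2 * (Sc : ℝ) + 1)) *
            ∑ i ∈ Finset.Icc (yc - (Sc : ℤ)) (yc + (Sc : ℤ)), f i) := by
      field_simp
    rw [heq]
    calc (2 * (Sc:ℝ) + 1) * ((1 / (2 * (Sc : ℝ) + 1)) *
            ∑ i ∈ Finset.Icc (yc - (Sc : ℤ)) (yc + (Sc : ℤ)), f i)
        ≤ (2 * (Sc:ℝ) + 1) * dntMax α f x := by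
          apply mul_le_mul_of_nonneg_left hle (by positivity)
      _ = ((2 * Sc + 1 : ℕ):ℝ) * dntMax α f x := by push_cast; ring
lemma sum_Ioc_consec (f : ℤ → ℝ) {a b c : ℤ} (hab : a ≤ b) (hbc : b ≤ c) :
    (∑ i ∈ Finset.Ioc a b, f i) + (∑ i ∈ Finset.Ioc b c, f i) = ∑ i ∈ Finset.Ioc a c, f i := by
  rw [← Finset.Ioc_union_Ioc_eq_Ioc hab hbc,
    Finset.sum_union (by
      rw [Finset.disjoint_left]
      intro i hi hi2
      simp only [Finset.mem_Ioc] at hi hi2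
      omega)]

lemma sum_Ico_consec (f : ℤ → ℝ) {a b c : ℤ} (hab : a ≤ b) (hbc : b ≤ c) :
    (∑ i ∈ Finset.Ico a b, f i) + (∑ i ∈ Finset.Ico b c, f i) = ∑ i ∈ Finset.Ico a c, f i := by
  rw [← Finset.Ico_union_Ico_eq_Ico hab hbc,
    Finset.sum_union (by
      rw [Finset.disjoint_left]
      intro i hi hi2
      simp only [Finset.mem_Ico] at hi hi2
      omega)]

end DntAux

/-- If `p < r < q` is a peak for `𝓜^α f` on which `r` maximizes `𝓜^α f`, then the peak
variation `2·𝓜^α f(r) − 𝓜^α f(p) − 𝓜^α f(q)` is at most the variation of `f` on `[p..q]`. -/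
theorem dntMax_peak_var (f : ℤ → ℝ) (hf0 : ∀ n, 0 ≤ f n) (hbv : dVar f ≠ ⊤)
    (α : ℝ) (hα : 1 / 3 ≤ α) (p r q : ℤ) (hpr : p < r) (hrq : r < q)
    (h1 : dntMax α f p < dntMax α f r) (h2 : dntMax α f q < dntMax α f r)
    (h3 : ∀ y : ℤ, p ≤ y → y ≤ q → dntMax α f y ≤ dntMax α f r) :
    2 * dntMax α f r - dntMax α f p - dntMax α f q ≤
      ∑ i ∈ Finset.Ico p q, |f (i + 1) - f i| := by
  have hα0 : (0:ℝ) ≤ α := by linarith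
  set Mp := dntMax α f p with hMp
  set Mq := dntMax α f q with hMq
  set Mr := dntMax α f r with hMr
  set V := ∑ i ∈ Finset.Ico p q, |f (i + 1) - f i| with hV
  have key : ∀ ε : ℝ, 0 < ε → Mp ≤ Mr - ε → Mq ≤ Mr - ε →
      2 * Mr - Mp - Mq ≤ V + 2 * ε := by
    intro ε hε hpε hqε
    have hne : (DntAux.dset α f r).Nonempty := ⟨f r, DntAux.self_mem α f r⟩
    obtain ⟨a, ha, hlt⟩ := exists_lt_of_lt_csSup hne
      (show Mr - ε < sSup (DntAux.dset α f r) by rw [← DntAux.dntMax_eq]; linarith)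
    obtain ⟨R, y, hry, rfl⟩ := ha
    have hc0 : (0:ℤ) ≤ ⌈α * (R:ℝ)⌉ := Int.ceil_nonneg (by positivity)
    have hrc := abs_le.mp hry
    obtain ⟨hrc1, hrc2⟩ := hrc
    -- unreachability of p and q
    have hp' : p + ⌈α * (R:ℝ)⌉ < y := by
      by_contra hcon
      push_neg at hcon
      have hadm : |p - y| ≤ ⌈α * (R:ℝ)⌉ := by rw [abs_le]; omega
      have := DntAux.le_dntMax hbv (⟨R, y, hadm, rfl⟩ : _ ∈ DntAux.dset α f p)
      rw [← hMp] at this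
      linarith
    have hq' : y + ⌈α * (R:ℝ)⌉ < q := by
      by_contra hcon
      push_neg at hcon
      have hadm : |q - y| ≤ ⌈α * (R:ℝ)⌉ := by rw [abs_le]; omega
      have := DntAux.le_dntMax hbv (⟨R, y, hadm, rfl⟩ : _ ∈ DntAux.dset α f q)
      rw [← hMq] at this
      linarith
    obtain ⟨WL, hWL, hWLp, hWLs⟩ := DntAux.left_cover hbv hα hp'
    obtain ⟨WR, hWR, hWRq, hWRs⟩ := DntAux.right_cover hbv hα hq'
    rw [← hMp] at hWLs
    rw [← hMq] at hWRs
    set u : ℤ := y - (R:ℤ) with hu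
    set v : ℤ := y + (R:ℤ) with hv
    set m1 : ℤ := u - 1 + (WL:ℤ) with hm1
    set m2 : ℤ := v - (WR:ℤ) with hm2
    have hWL0 : (0:ℤ) ≤ (WL:ℤ) := by positivity
    have hWR0 : (0:ℤ) ≤ (WR:ℤ) := by positivity
    have hm12 : m1 < m2 := by omega
    -- split the sum over I = Icc u v
    have hIcc : Finset.Icc u v = Finset.Ioc (u - 1) v := by
      ext i
      simp only [Finset.mem_Icc, Finset.mem_Ioc]
      omega
    have hab : u - 1 ≤ m1 := by omega
    have hbc : m1 ≤ m2 := by omega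
    have hcv : m2 ≤ v := by omega
    have hs1 : (∑ i ∈ Finset.Ioc (u-1) m1, f i) + (∑ i ∈ Finset.Ioc m1 m2, f i)
        = ∑ i ∈ Finset.Ioc (u-1) m2, f i :=
      DntAux.sum_Ioc_consec f hab hbc
    have hs2 : (∑ i ∈ Finset.Ioc (u-1) m2, f i) + (∑ i ∈ Finset.Ioc m2 v, f i)
        = ∑ i ∈ Finset.Ioc (u-1) v, f i :=
      DntAux.sum_Ioc_consec f (hab.trans hbc) hcv
    -- the max point j of the middle part
    have hmidne : (Finset.Ioc m1 m2).Nonempty := ⟨m2, by simp only [Finset.mem_Ioc]; omega⟩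
    obtain ⟨j, hjmem, hjmax⟩ := Finset.exists_max_image (Finset.Ioc m1 m2) f hmidne
    rw [Finset.mem_Ioc] at hjmem
    have hpj : p ≤ j := by omega
    have hjq : j ≤ q := by omega
    set L : ℕ := 2 * R + 1 - WL - WR with hL
    have hWsum : WL + WR ≤ 2 * R := by
      have h1' : WL ≤ R := by exact_mod_cast hWL
      have h2' : WR ≤ R := by exact_mod_cast hWR
      omega
    have hLpos : 0 < L := by omega
    have hLcast : (L:ℤ) = m2 - m1 := by
      push_cast [hL]
      omega
    have hmidsum : ∑ i ∈ Finset.Ioc m1 m2, f i ≤ (L:ℝ) * f j := by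
      have hcard : (Finset.Ioc m1 m2).card = L := by
        rw [Int.card_Ioc]
        omega
      calc ∑ i ∈ Finset.Ioc m1 m2, f i
          ≤ (Finset.Ioc m1 m2).card • f j :=
            Finset.sum_le_card_nsmul _ _ _ (fun i hi => hjmax i hi)
        _ = (L:ℝ) * f j := by rw [hcard, nsmul_eq_mul]
    -- total sum lower bound
    have hn : (0:ℝ) < 2 * (R:ℝ) + 1 := by positivity
    have htot : (2 * (R:ℝ) + 1) * (Mr - ε) < ∑ i ∈ Finset.Icc u v, f i := by
      have h' := mul_lt_mul_of_pos_left hlt hn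
      calc (2 * (R:ℝ) + 1) * (Mr - ε)
          < (2 * (R:ℝ) + 1) * ((1 / (2 * (R:ℝ) + 1)) * ∑ i ∈ Finset.Icc (y - (R:ℤ)) (y + (R:ℤ)), f i) := h'
        _ = ∑ i ∈ Finset.Icc u v, f i := by rw [hu, hv]; field_simp
    -- combine to get Mr - ε < f j
    have hfj : Mr - ε < f j := by
      have e1 : ∑ i ∈ Finset.Ioc (u-1) m1, f i ≤ (WL:ℝ) * (Mr - ε) := by
        calc ∑ i ∈ Finset.Ioc (u-1) m1, f i ≤ (WL:ℝ) * Mp := hWLs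
          _ ≤ (WL:ℝ) * (Mr - ε) := by
              apply mul_le_mul_of_nonneg_left hpε (by positivity)
      have e3 : ∑ i ∈ Finset.Ioc m2 v, f i ≤ (WR:ℝ) * (Mr - ε) := by
        calc ∑ i ∈ Finset.Ioc m2 v, f i ≤ (WR:ℝ) * Mq := hWRs
          _ ≤ (WR:ℝ) * (Mr - ε) := by
              apply mul_le_mul_of_nonneg_left hqε (by positivity)
      have hcastn : (2 * (R:ℝ) + 1) = (WL:ℝ) + (L:ℝ) + (WR:ℝ) := by
        have : (L:ℤ) = 2 * (R:ℤ) + 1 - WL - WR := by push_cast [hL]; omega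
        have h2 : (L:ℝ) = 2 * (R:ℝ) + 1 - (WL:ℝ) - (WR:ℝ) := by exact_mod_cast this
        linarith
      have hring : (2 * (R:ℝ) + 1) * (Mr - ε)
          = (WL:ℝ) * (Mr - ε) + (L:ℝ) * (Mr - ε) + (WR:ℝ) * (Mr - ε) := by
        rw [hcastn]; ring
      have hIoc' : ∑ i ∈ Finset.Icc u v, f i = ∑ i ∈ Finset.Ioc (u-1) v, f i := by
        rw [hIcc]
      have hLlt : (L:ℝ) * (Mr - ε) < (L:ℝ) * f j := by linarith
      have hL0 : (0:ℝ) < (L:ℝ) := by exact_mod_cast hLpos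
      exact lt_of_mul_lt_mul_left hLlt hL0.le
    -- variation bookkeeping
    have hVsplit : (∑ i ∈ Finset.Ico p j, |f (i+1) - f i|)
        + (∑ i ∈ Finset.Ico j q, |f (i+1) - f i|) = V := by
      rw [hV]
      exact DntAux.sum_Ico_consec _ hpj hjq
    have vb1 : |f j - f p| ≤ ∑ i ∈ Finset.Ico p j, |f (i+1) - f i| :=
      DntAux.abs_sub_le_var f hpj
    have vb2 : |f q - f j| ≤ ∑ i ∈ Finset.Ico j q, |f (i+1) - f i| :=
      DntAux.abs_sub_le_var f hjq
    have hfp : f p ≤ Mp := DntAux.f_le_dntMax hbv p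
    have hfq : f q ≤ Mq := DntAux.f_le_dntMax hbv q
    have l1 := le_abs_self (f j - f p)
    have l2 := neg_abs_le (f q - f j)
    linarith
  -- conclusion from key
  by_contra hcon
  push_neg at hcon
  have hgp : 0 < Mr - Mp := by linarith
  have hgq : 0 < Mr - Mq := by linarith
  set ε := min (min (Mr - Mp) (Mr - Mq)) ((2 * Mr - Mp - Mq - V) / 3) with hε
  have hε0 : 0 < ε := by
    apply lt_min (lt_min hgp hgq)
    linarith
  have ha1 : ε ≤ min (Mr - Mp) (Mr - Mq) :=
    min_le_left (min (Mr - Mp) (Mr - Mq)) ((2 * Mr - Mp - Mq - V) / 3)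
  have ha2 : min (Mr - Mp) (Mr - Mq) ≤ Mr - Mp := min_le_left _ _
  have ha3 : min (Mr - Mp) (Mr - Mq) ≤ Mr - Mq := min_le_right _ _
  have hεp : Mp ≤ Mr - ε := by linarith
  have hεq : Mq ≤ Mr - ε := by linarith
  have hε3 : ε ≤ (2 * Mr - Mp - Mq - V) / 3 :=
    min_le_right (min (Mr - Mp) (Mr - Mq)) ((2 * Mr - Mp - Mq - V) / 3)
  have := key ε hε0 hεp hεq
  linarith
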